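/- arXiv:1410.6115 — 4 statements merged into one kernel-verified Lean document; each statement's English description precedes it below -/
import Mathlib

section
/- Assume Ω ⊂ ℝⁿ is a nonempty open bounded convex set satisfying an interior sphere condition, let u be a solution of the Dirichlet problem (D), and set w := −u^{3/4} on the closure of Ω (so w = 0 on ∂Ω). For x ∈ Ω, define w**(x) as the infimum of Σ_{i=1}^k λᵢ w(xᵢ) over all k ≤ n+1, points x₁,…,x_k in the closure of Ω and weights λ₁,…,λ_k > 0 with Σλᵢ = 1 and Σλᵢxᵢ = x. If x₁,…,x_k in the closure of Ω and λ₁,…,λ_k > 0 with Σλᵢ = 1 satisfy x = Σλᵢxᵢ and w**(x) = Σλᵢw(xᵢ), then x₁,…,x_k all belong to Ω (none lies on ∂Ω). -/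
open Set Metric Filter MeasureTheory
open scoped RealInnerProductSpace Topology NNReal

noncomputable section

abbrev Euc (n : ℕ) := EuclideanSpace ℝ (Fin n)

def infLap {n : ℕ} (φ : Euc n → ℝ) (x : Euc n) : ℝ :=
  ⟪fderiv ℝ (gradient φ) x (gradient φ x), gradient φ x⟫

def IsViscSubsol {n : ℕ} (Ω : Set (Euc n)) (f : Euc n → ℝ → ℝ) (u : Euc n → ℝ) : Prop :=
  ContinuousOn u Ω ∧
  ∀ x₀ ∈ Ω, ∀ φ : Euc n → ℝ, ContDiff ℝ 2 φ →
    IsLocalMaxOn (fun x => u x - φ x) Ω x₀ → -infLap φ x₀ - f x₀ (u x₀) ≤ 0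

def IsViscSupersol {n : ℕ} (Ω : Set (Euc n)) (f : Euc n → ℝ → ℝ) (u : Euc n → ℝ) : Prop :=
  ContinuousOn u Ω ∧
  ∀ x₀ ∈ Ω, ∀ φ : Euc n → ℝ, ContDiff ℝ 2 φ →
    IsLocalMinOn (fun x => u x - φ x) Ω x₀ → 0 ≤ -infLap φ x₀ - f x₀ (u x₀)

def IsDirichletSol {n : ℕ} (Ω : Set (Euc n)) (u : Euc n → ℝ) : Prop :=
  ContinuousOn u (closure Ω) ∧ (∀ x ∈ frontier Ω, u x = 0) ∧
  IsViscSubsol Ω (fun _ _ => 1) u ∧ IsViscSupersol Ω (fun _ _ => 1) u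

def IntSphereCond {n : ℕ} (Ω : Set (Euc n)) : Prop :=
  ∀ y ∈ frontier Ω, ∃ z : Euc n, ∃ R : ℝ, 0 < R ∧ ball z R ⊆ Ω ∧ y ∈ sphere z R

/-- The set of values `Σ λᵢ w(xᵢ)` over convex combinations (with at most `n+1` points of the
closure of `Ω`) representing `x`, whose infimum defines the convex envelope `w**`. -/
def envVals {n : ℕ} (Ω : Set (Euc n)) (w : Euc n → ℝ) (x : Euc n) : Set ℝ :=
  {s | ∃ k : ℕ, 1 ≤ k ∧ k ≤ n + 1 ∧ ∃ xs : Fin k → Euc n, ∃ lam : Fin k → ℝ,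
    (∀ i, xs i ∈ closure Ω) ∧ (∀ i, 0 < lam i) ∧ (∑ i, lam i) = 1 ∧
    (∑ i, lam i • xs i) = x ∧ s = ∑ i, lam i * w (xs i)}

/-!
Let `p = xs i` lie on `∂Ω` and let `B_R(c) ⊆ Ω` be the interior ball at `p`. Comparison with the
paraboloid `a (R² - |y - c|²)` bounds `u` from below on that ball, and by convexity `x - p` points
strictly into it, so `u` grows at least linearly from `p` towards `x` and `w = -u^{3/4}` drops like
`-t^{3/4}`. Optimality of the representation, on the other hand, keeps `w` above a chord along the
same segment, which drops only linearly in `t`.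
-/

lemma infLap_const {n : ℕ} (c : ℝ) (x : Euc n) : infLap (fun _ => c) x = 0 := by
  have hg : gradient (fun _ : Euc n => c) = fun _ => 0 :=
    funext fun y => (hasGradientAt_const y c).gradient
  simp [infLap, hg]

lemma hasGradientAt_paraboloid {n : ℕ} (a R : ℝ) (c x : Euc n) :
    HasGradientAt (fun y => a * (R ^ 2 - ‖y - c‖ ^ 2)) ((-(2 * a)) • (x - c)) x := by
  have h := ((hasFDerivAt_const (R ^ 2) x).sub
    (((hasFDerivAt_id x).sub_const c).norm_sq)).const_mul a
  rw [hasGradientAt_iff_hasFDerivAt]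
  refine h.congr_fderiv ?_
  ext y
  simp [InnerProductSpace.toDual_apply_apply]
  ring

lemma infLap_paraboloid {n : ℕ} (a R : ℝ) (c x : Euc n) :
    infLap (fun y => a * (R ^ 2 - ‖y - c‖ ^ 2)) x = -(8 * a ^ 3) * ‖x - c‖ ^ 2 := by
  have hg : gradient (fun y : Euc n => a * (R ^ 2 - ‖y - c‖ ^ 2)) = fun y => (-(2 * a)) • (y - c) :=
    funext fun y => (hasGradientAt_paraboloid a R c y).gradient
  have hf : HasFDerivAt (fun y : Euc n => (-(2 * a)) • (y - c))
      ((-(2 * a)) • ContinuousLinearMap.id ℝ (Euc n)) x :=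
    ((hasFDerivAt_id x).sub_const c).const_smul (-(2 * a))
  rw [infLap, hg, hf.fderiv, smul_apply, ContinuousLinearMap.id_apply,
    real_inner_smul_left, real_inner_smul_left, real_inner_smul_right,
    real_inner_self_eq_norm_sq]
  ring

lemma contDiff_paraboloid {n : ℕ} (a R : ℝ) (c : Euc n) :
    ContDiff ℝ 2 (fun y : Euc n => a * (R ^ 2 - ‖y - c‖ ^ 2)) :=
  contDiff_const.mul (contDiff_const.sub ((contDiff_id.sub contDiff_const).norm_sq ℝ))

section Supersolution

variable {n : ℕ} {Ω : Set (Euc n)} {u : Euc n → ℝ}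

lemma IsViscSupersol.not_isLocalMinOn {f : Euc n → ℝ → ℝ} (hu : IsViscSupersol Ω f u)
    {x₀ : Euc n} (hx₀ : x₀ ∈ Ω) (hf : 0 < f x₀ (u x₀)) : ¬ IsLocalMinOn u Ω x₀ := fun hmin => by
  have h := hu.2 x₀ hx₀ (fun _ => 0) contDiff_const (by simpa using hmin)
  rw [infLap_const] at h
  linarith

lemma IsViscSupersol.nonneg {f : Euc n → ℝ → ℝ} (hu : IsViscSupersol Ω f u)
    (hf : ∀ z ∈ Ω, 0 < f z (u z)) (hbdd : Bornology.IsBounded Ω)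
    (hucont : ContinuousOn u (closure Ω)) (hub : ∀ z ∈ frontier Ω, u z = 0) :
    ∀ z ∈ closure Ω, 0 ≤ u z := by
  intro z hz
  obtain ⟨m, hm, hmin⟩ := hbdd.isCompact_closure.exists_isMinOn ⟨z, hz⟩ hucont
  have hmΩ : m ∉ Ω := fun hmΩ =>
    hu.not_isLocalMinOn hmΩ (hf m hmΩ) (hmin.on_subset subset_closure).localize
  have hm0 : u m = 0 := hub m ⟨hm, fun h => hmΩ (interior_subset h)⟩
  exact hm0 ▸ hmin hz

/-- The paraboloid is a strict subsolution in the ball: its `-Δ∞` is `8 a³ |y - c|² < 1`. -/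
lemma IsViscSupersol.paraboloid_le (hu : IsViscSupersol Ω (fun _ _ => 1) u)
    (hucont : ContinuousOn u (closure Ω)) (hnn : ∀ z ∈ closure Ω, 0 ≤ u z)
    {c : Euc n} {R a : ℝ} (hR : 0 < R) (ha : 0 < a) (haR : 8 * a ^ 3 * R ^ 2 < 1)
    (hball : ball c R ⊆ Ω) :
    ∀ y ∈ closedBall c R, a * (R ^ 2 - ‖y - c‖ ^ 2) ≤ u y := by
  set v : Euc n → ℝ := fun y => a * (R ^ 2 - ‖y - c‖ ^ 2)
  have hsub : closedBall c R ⊆ closure Ω := closure_ball c hR.ne' ▸ closure_mono hball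
  obtain ⟨x₀, hx₀, hmin⟩ := (isCompact_closedBall c R).exists_isMinOn
    (nonempty_closedBall.2 hR.le)
    ((hucont.mono hsub).sub (contDiff_paraboloid a R c).continuous.continuousOn)
  by_contra! ⟨y, hy, hlt⟩
  have hneg : u x₀ - v x₀ < 0 := (hmin hy).trans_lt (sub_neg.2 hlt)
  have hx₀ball : x₀ ∈ ball c R := by
    refine (mem_closedBall.1 hx₀).lt_of_ne fun hdist => ?_
    have hv : v x₀ = 0 := by simp [v, ← dist_eq_norm, hdist]
    linarith [hnn x₀ (hsub hx₀)]
  have hloc : IsLocalMinOn (fun y => u y - v y) Ω x₀ :=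
    Filter.mem_of_superset (mem_nhdsWithin_of_mem_nhds (isOpen_ball.mem_nhds hx₀ball))
      fun z hz => hmin (ball_subset_closedBall hz)
  have hkey := hu.2 x₀ (hball hx₀ball) v (contDiff_paraboloid a R c) hloc
  rw [infLap_paraboloid] at hkey
  have hx₀R : ‖x₀ - c‖ ^ 2 ≤ R ^ 2 := by
    rw [← dist_eq_norm]; exact pow_le_pow_left₀ dist_nonneg (mem_closedBall.1 hx₀) 2
  nlinarith [pow_pos ha 3]

end Supersolution

/-- The tangent hyperplane of the ball at `p` is the only candidate for a supporting hyperplane of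
`Ω` at `p`. -/
lemma Convex.inner_sub_pos_of_ball_subset {E : Type*} [NormedAddCommGroup E]
    [InnerProductSpace ℝ E] [CompleteSpace E] {Ω : Set E} (hconv : Convex ℝ Ω) (hopen : IsOpen Ω)
    {p c x : E} {R : ℝ} (hR : 0 < R) (hball : ball c R ⊆ Ω) (hpc : ‖p - c‖ = R) (hp : p ∉ Ω)
    (hx : x ∈ Ω) : 0 < ⟪c - p, x - p⟫ := by
  obtain ⟨f, hf⟩ := geometric_hahn_banach_open_point hconv hopen hp
  set ν := (InnerProductSpace.toDual ℝ E).symm f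
  have hfν : ∀ z, f z = ⟪ν, z⟫ := fun z => InnerProductSpace.toDual_symm_apply.symm
  have hν : 0 < ‖ν‖ := norm_pos_iff.2 fun h0 => by simpa [hfν, h0] using hf x hx
  have hle : ∀ z ∈ closedBall c R, f z ≤ f p := by
    rw [← closure_ball c hR.ne']
    exact closure_minimal (fun z hz => (hf z (hball hz)).le)
      (isClosed_le f.continuous continuous_const)
  -- evaluating at the point of the ball in direction `ν` gives equality in Cauchy–Schwarz
  have hνp : ⟪ν, p - c⟫ = ‖ν‖ * ‖p - c‖ := by
    refine le_antisymm (real_inner_le_norm _ _) ?_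
    have hq : c + (R / ‖ν‖) • ν ∈ closedBall c R := by
      rw [mem_closedBall, dist_eq_norm, add_sub_cancel_left, norm_smul, Real.norm_eq_abs,
        abs_of_pos (div_pos hR hν), div_mul_cancel₀ _ hν.ne']
    have h := hle _ hq
    rw [hfν, hfν, inner_add_right, real_inner_smul_right, real_inner_self_eq_norm_mul_norm,
      div_mul_eq_mul_div, mul_div_assoc, mul_div_cancel_left₀ _ hν.ne'] at h
    rw [inner_sub_right, hpc]
    linarith
  have hparallel : ‖ν‖ * ⟪p - c, x - p⟫ = R * ⟪ν, x - p⟫ := by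
    rw [← real_inner_smul_left, ← inner_eq_norm_mul_iff_real.1 hνp, real_inner_smul_left, hpc]
  have hνx : ⟪ν, x - p⟫ < 0 := by
    rw [inner_sub_right, ← hfν, ← hfν]
    linarith [hf x hx]
  rw [← neg_sub p c, inner_neg_left]
  nlinarith

lemma exists_pos_mul_pow_three_lt_one (R : ℝ) : ∃ a > 0, 8 * a ^ 3 * R ^ 2 < 1 := by
  have h : Tendsto (fun a : ℝ => 8 * a ^ 3 * R ^ 2) (𝓝[>] 0) (𝓝 0) := by
    simpa using ((by fun_prop : Continuous fun a : ℝ => 8 * a ^ 3 * R ^ 2).tendsto 0).mono_left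
      nhdsWithin_le_nhds
  obtain ⟨a, ha1, ha0⟩ := ((h.eventually (gt_mem_nhds one_pos)).and self_mem_nhdsWithin).exists
  exact ⟨a, ha0, ha1⟩

lemma IsViscSupersol.exists_eventually_mul_le {n : ℕ} {Ω : Set (Euc n)} {u : Euc n → ℝ}
    (hu : IsViscSupersol Ω (fun _ _ => 1) u) (hopen : IsOpen Ω) (hconv : Convex ℝ Ω)
    (hsphere : IntSphereCond Ω) (hucont : ContinuousOn u (closure Ω))
    (hnn : ∀ z ∈ closure Ω, 0 ≤ u z) {p x : Euc n} (hp : p ∈ frontier Ω) (hx : x ∈ Ω) :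
    ∃ A > 0, ∀ᶠ t in 𝓝[>] 0, A * t ≤ u (p + t • (x - p)) := by
  obtain ⟨c, R, hR, hball, hpR⟩ := hsphere p hp
  have hpc : ‖p - c‖ = R := by rw [← dist_eq_norm]; exact mem_sphere.1 hpR
  have hpΩ : p ∉ Ω := fun h => (hopen.inter_frontier_eq.subset ⟨h, hp⟩ :)
  set γ := ⟪c - p, x - p⟫
  have hγ : 0 < γ := hconv.inner_sub_pos_of_ball_subset hopen hR hball hpc hpΩ hx
  obtain ⟨a, ha, haR⟩ := exists_pos_mul_pow_three_lt_one R
  have hsmall : ∀ᶠ t in 𝓝[>] 0, t * ‖x - p‖ ^ 2 < γ := by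
    have h : Tendsto (fun t : ℝ => t * ‖x - p‖ ^ 2) (𝓝[>] 0) (𝓝 0) := by
      simpa using ((by fun_prop : Continuous fun t : ℝ => t * ‖x - p‖ ^ 2).tendsto 0).mono_left
        nhdsWithin_le_nhds
    exact h.eventually (gt_mem_nhds hγ)
  refine ⟨a * γ, mul_pos ha hγ, ?_⟩
  filter_upwards [self_mem_nhdsWithin, hsmall] with t (ht : 0 < t) hts
  have hnorm : ‖p + t • (x - p) - c‖ ^ 2 ≤ R ^ 2 - t * γ := by
    rw [show p + t • (x - p) - c = (p - c) + t • (x - p) by abel, norm_add_sq_real, hpc,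
      real_inner_smul_right, norm_smul, mul_pow, Real.norm_eq_abs, sq_abs, ← neg_sub c p,
      inner_neg_left]
    nlinarith
  have hy : p + t • (x - p) ∈ closedBall c R := by
    rw [mem_closedBall, dist_eq_norm, ← pow_le_pow_iff_left₀ (norm_nonneg _) hR.le two_ne_zero]
    nlinarith
  calc a * γ * t ≤ a * (R ^ 2 - ‖p + t • (x - p) - c‖ ^ 2) := by nlinarith
    _ ≤ u (p + t • (x - p)) := hu.paraboloid_le hucont hnn hR ha haR hball _ hy

section ConvexEnvelope

variable {n : ℕ} {Ω : Set (Euc n)} {w : Euc n → ℝ} {x : Euc n}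

lemma bddBelow_envVals (hw : BddBelow (w '' closure Ω)) (x : Euc n) :
    BddBelow (envVals Ω w x) := by
  obtain ⟨m, hm⟩ := hw
  refine ⟨m, ?_⟩
  rintro s ⟨k, -, -, ys, μ, hys, hμ, hμsum, -, rfl⟩
  calc m = ∑ i, μ i * m := by rw [← Finset.sum_mul, hμsum, one_mul]
    _ ≤ ∑ i, μ i * w (ys i) := Finset.sum_le_sum fun i _ =>
      mul_le_mul_of_nonneg_left (hm (mem_image_of_mem w (hys i))) (hμ i).le

/-- Moving the point `xs i` of an optimal representation of `x` a fraction `t` of the way towards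
`x` gives a competing representation, whence `w` lies above the chord from `(xs i, w (xs i))` to
`(x, w**(x))`. -/
lemma le_apply_add_smul_sub_of_mem_lowerBounds {k : ℕ} {xs : Fin k → Euc n} {lam : Fin k → ℝ}
    (hkn : k ≤ n + 1) (hxs : ∀ i, xs i ∈ closure Ω) (hlam : ∀ i, 0 < lam i)
    (hsum : ∑ i, lam i = 1) (hcomb : ∑ i, lam i • xs i = x)
    (hmin : ∑ i, lam i * w (xs i) ∈ lowerBounds (envVals Ω w x))
    (i : Fin k) {t : ℝ} (ht0 : 0 ≤ t) (ht1 : t < 1) (hy : xs i + t • (x - xs i) ∈ closure Ω) :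
    (1 - t) * w (xs i) + t * ∑ j, lam j * w (xs j) ≤ w (xs i + t • (x - xs i)) := by
  classical
  set y := xs i + t • (x - xs i)
  set S := ∑ j, lam j * w (xs j)
  set d := 1 - t + t * lam i
  have hd : 0 < d := by nlinarith [hlam i]
  set lam' : Fin k → ℝ := fun j => d⁻¹ * ((1 - t) * lam j + if j = i then t * lam i else 0)
  set xs' := Function.update xs i y
  have hlam' : ∀ j, 0 < lam' j := by
    intro j
    have : 0 < (1 - t) * lam j + if j = i then t * lam i else 0 := by
      split_ifs <;> nlinarith [hlam j, hlam i]
    positivity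
  have hxs' : ∀ j, xs' j ∈ closure Ω := by
    intro j
    rcases eq_or_ne j i with rfl | hj
    · simpa [xs'] using hy
    · simpa [xs', Function.update_of_ne hj] using hxs j
  have hsum' : ∑ j, lam' j = 1 := by
    simp only [lam', ← Finset.mul_sum, Finset.sum_add_distrib, Finset.sum_ite_eq',
      Finset.mem_univ, if_true, hsum]
    field_simp
    ring
  have hcomb' : ∑ j, lam' j • xs' j = x := by
    have h : ∀ j, lam' j • xs' j =
        d⁻¹ • ((1 - t) • (lam j • xs j) + if j = i then (t * lam i) • x else 0) := by
      intro j
      rcases eq_or_ne j i with rfl | hj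
      · simp only [lam', xs', y, Function.update_self, if_true]
        module
      · simp only [lam', xs', Function.update_of_ne hj, if_neg hj, add_zero, smul_smul]
    rw [Finset.sum_congr rfl fun j _ => h j, ← Finset.smul_sum, Finset.sum_add_distrib,
      ← Finset.smul_sum, hcomb, Finset.sum_ite_eq', if_pos (Finset.mem_univ _), ← add_smul,
      smul_smul, inv_mul_cancel₀ hd.ne', one_smul]
  have hval : ∑ j, lam' j * w (xs' j) =
      d⁻¹ * ((1 - t) * S + lam i * (w y - (1 - t) * w (xs i))) := by
    have h : ∀ j, lam' j * w (xs' j) = d⁻¹ * ((1 - t) * (lam j * w (xs j)) +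
        if j = i then lam i * (w y - (1 - t) * w (xs i)) else 0) := by
      intro j
      rcases eq_or_ne j i with rfl | hj
      · simp only [lam', xs', Function.update_self, if_true]
        ring
      · simp only [lam', xs', Function.update_of_ne hj, if_neg hj, add_zero]
        ring
    rw [Finset.sum_congr rfl fun j _ => h j, ← Finset.mul_sum, Finset.sum_add_distrib,
      ← Finset.mul_sum, Finset.sum_ite_eq', if_pos (Finset.mem_univ _)]
  have hS := hmin ⟨k, i.pos, hkn, xs', lam', hxs', hlam', hsum', hcomb', hval.symm⟩
  rw [le_inv_mul_iff₀ hd] at hS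
  have hi : lam i * (t * S) ≤ lam i * (w y - (1 - t) * w (xs i)) := by linarith
  linarith [le_of_mul_le_mul_left hi (hlam i)]

end ConvexEnvelope

lemma eventually_mul_lt_rpow {A r : ℝ} (hA : 0 < A) (hr : r < 1) (B : ℝ) :
    ∀ᶠ t in 𝓝[>] 0, B * t < (A * t) ^ r := by
  have h : Tendsto (fun t : ℝ => B * t ^ (1 - r)) (𝓝[>] 0) (𝓝 0) := by
    simpa [Real.zero_rpow (by linarith : 1 - r ≠ 0)] using
      ((Real.continuousAt_rpow_const 0 (1 - r) (Or.inr (by linarith))).tendsto.const_mul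
        B).mono_left nhdsWithin_le_nhds
  filter_upwards [h.eventually (gt_mem_nhds (Real.rpow_pos_of_pos hA r)), self_mem_nhdsWithin]
    with t ht (ht0 : 0 < t)
  calc B * t = B * t ^ (1 - r) * t ^ r := by
        rw [mul_assoc, ← Real.rpow_add ht0, sub_add_cancel, Real.rpow_one]
    _ < A ^ r * t ^ r := mul_lt_mul_of_pos_right ht (Real.rpow_pos_of_pos ht0 r)
    _ = (A * t) ^ r := (Real.mul_rpow hA.le ht0.le).symm

theorem stmt2_general {n : ℕ} (Ω : Set (Euc n)) (hopen : IsOpen Ω)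
    (hbdd : Bornology.IsBounded Ω) (hconv : Convex ℝ Ω) (hsphere : IntSphereCond Ω)
    (u : Euc n → ℝ) (hu : IsDirichletSol Ω u)
    (w : Euc n → ℝ) (hw : ∀ x, w x = -(u x ^ ((3:ℝ)/4)))
    (x : Euc n) (hx : x ∈ Ω)
    (k : ℕ) (hkn : k ≤ n + 1)
    (xs : Fin k → Euc n) (lam : Fin k → ℝ)
    (hxs : ∀ i, xs i ∈ closure Ω) (hlam : ∀ i, 0 < lam i)
    (hsum : (∑ i, lam i) = 1) (hcomb : (∑ i, lam i • xs i) = x)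
    (hmin : (∑ i, lam i * w (xs i)) = sInf (envVals Ω w x)) :
    ∀ i, xs i ∈ Ω := by
  obtain ⟨hucont, hub, -, hsup⟩ := hu
  have hnn := hsup.nonneg (fun _ _ => one_pos) hbdd hucont hub
  have hwcont : ContinuousOn w (closure Ω) := by
    rw [funext hw]
    exact (hucont.rpow_const fun _ _ => Or.inr (by norm_num)).neg
  have hlower : ∑ i, lam i * w (xs i) ∈ lowerBounds (envVals Ω w x) := fun s hs =>
    hmin ▸ csInf_le (bddBelow_envVals (hbdd.isCompact_closure.bddBelow_image hwcont) x) hs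
  intro i
  by_contra hi
  have hp : xs i ∈ frontier Ω := ⟨hxs i, fun h => hi (interior_subset h)⟩
  obtain ⟨A, hA, hgrowth⟩ := hsup.exists_eventually_mul_le hopen hconv hsphere hucont hnn hp hx
  obtain ⟨t, hAt, hlt, ht0, ht1⟩ := (hgrowth.and ((eventually_mul_lt_rpow hA
    (by norm_num : (3:ℝ) / 4 < 1) (-∑ j, lam j * w (xs j))).and (Ioo_mem_nhdsGT one_pos))).exists
  have hy : xs i + t • (x - xs i) ∈ closure Ω :=
    hconv.closure.add_smul_sub_mem (hxs i) (subset_closure hx) ⟨ht0.le, ht1.le⟩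
  have hchord := le_apply_add_smul_sub_of_mem_lowerBounds hkn hxs hlam hsum hcomb hlower i
    ht0.le ht1 hy
  have hpow := Real.rpow_le_rpow (by positivity) hAt (by norm_num : (0:ℝ) ≤ 3 / 4)
  rw [hw (xs i), hub _ hp, Real.zero_rpow (by norm_num), hw] at hchord
  linarith

theorem stmt2 {n : ℕ} (Ω : Set (Euc n)) (hne : Ω.Nonempty) (hopen : IsOpen Ω)
    (hbdd : Bornology.IsBounded Ω) (hconv : Convex ℝ Ω) (hsphere : IntSphereCond Ω)
    (u : Euc n → ℝ) (hu : IsDirichletSol Ω u)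
    (w : Euc n → ℝ) (hw : ∀ x, w x = -(u x ^ ((3:ℝ)/4)))
    (x : Euc n) (hx : x ∈ Ω)
    (k : ℕ) (hk1 : 1 ≤ k) (hkn : k ≤ n + 1)
    (xs : Fin k → Euc n) (lam : Fin k → ℝ)
    (hxs : ∀ i, xs i ∈ closure Ω) (hlam : ∀ i, 0 < lam i)
    (hsum : (∑ i, lam i) = 1) (hcomb : (∑ i, lam i • xs i) = x)
    (hmin : (∑ i, lam i * w (xs i)) = sInf (envVals Ω w x)) :
    ∀ i, xs i ∈ Ω :=
  stmt2_general Ω hopen hbdd hconv hsphere u hu w hw x hx k hkn xs lam hxs hlam hsum hcomb hmin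
end
end

section
/- Let p₀,…,p_k ∈ ℝⁿ (k ≥ 1), let λ₀,…,λ_k ∈ (0,1) with Σλᵢ = 1, let p := Σλᵢpᵢ, and assume the pᵢ are not all equal to p. Let Q := conv{p−p₀,…,p−p_k}, let F := span{p₀−p,…,p_k−p}, and let K be the distance from the origin to the boundary of Q relative to the subspace F. Then K > 0 and, for every nonzero z ∈ conv{p₀−p,…,p_k−p}, setting ζ := z/|z|, one has min_{0≤i≤k} ⟨pᵢ−p, x⟩ ≤ −K|⟨ζ, x⟩| for all x ∈ ℝⁿ. -/
open Set Metric Filter MeasureTheory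
open scoped RealInnerProductSpace Topology NNReal

noncomputable section

/-! Since `0 = ∑ λᵢ (p - pᵢ)` with all `λᵢ > 0`, the open mapping theorem for the coefficient map
`c ↦ ∑ cᵢ (p - pᵢ)` shows that `0` lies in the relative interior of `Q`, so `K > 0`; as `Q` is
bounded and not a point, its relative boundary is nonempty. A segment from `0` that stays in the
affine span of `Q` and leaves `Q` must cross the relative boundary, so `Q` contains every point of
its affine span within distance `K` of `0`, in particular `±K ζ` (note `-z ∈ Q`). Since `Q` lies in
the half-space `⟨·, x⟩ ≤ -minᵢ ⟨pᵢ - p, x⟩`, evaluating at `±K ζ` gives the bound. -/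

section IntrinsicFrontier

variable {E : Type*} [NormedAddCommGroup E] [NormedSpace ℝ E]

theorem exists_lineMap_mem_intrinsicFrontier {s : Set E} {x y : E} (hx : x ∈ s)
    (hy : y ∈ affineSpan ℝ s) (hys : y ∉ s) :
    ∃ t ∈ Icc (0 : ℝ) 1, AffineMap.lineMap x y t ∈ intrinsicFrontier ℝ s := by
  let γ : unitInterval → affineSpan ℝ s := fun t =>
    ⟨AffineMap.lineMap x y (t : ℝ), AffineMap.lineMap_mem _ (mem_affineSpan ℝ hx) hy⟩
  have hγ : Continuous γ :=
    (AffineMap.lineMap_continuous.comp continuous_subtype_val).subtype_mk _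
  obtain ⟨t, ht⟩ : (frontier (γ ⁻¹' ((↑) ⁻¹' s))).Nonempty := by
    refine nonempty_frontier_iff.2 ⟨⟨0, by simpa [γ] using hx⟩, fun h => hys ?_⟩
    have h1 : (1 : unitInterval) ∈ γ ⁻¹' ((↑) ⁻¹' s) := h ▸ mem_univ _
    simpa [γ] using h1
  exact ⟨t, t.2, mem_intrinsicFrontier.2 ⟨γ t, hγ.frontier_preimage_subset _ ht, rfl⟩⟩

theorem mem_of_dist_le_infDist_intrinsicFrontier {s : Set E} (hs : IsClosed s) {x y : E}
    (hx : x ∈ s) (hy : y ∈ affineSpan ℝ s)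
    (hxy : dist x y ≤ infDist x (intrinsicFrontier ℝ s)) : y ∈ s := by
  by_contra hys
  obtain ⟨t, ht, hfr⟩ := exists_lineMap_mem_intrinsicFrontier hx hy hys
  have ht1 : t < 1 :=
    ht.2.lt_of_ne fun h => hys (by simpa [h] using intrinsicFrontier_subset hs hfr)
  have hd : 0 < dist x y := dist_pos.2 fun h => hys (h ▸ hx)
  have hle := infDist_le_dist_of_mem (x := x) hfr
  rw [dist_left_lineMap, Real.norm_of_nonneg ht.1] at hle
  nlinarith

theorem smul_mem_of_norm_le_infDist_intrinsicFrontier {s : Set E} (hs : IsClosed s)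
    (h0 : (0 : E) ∈ s) {u : E} (hu : u ∈ s) {c : ℝ}
    (hc : ‖c • u‖ ≤ infDist 0 (intrinsicFrontier ℝ s)) : c • u ∈ s := by
  refine mem_of_dist_le_infDist_intrinsicFrontier hs h0 ?_ (by rwa [dist_zero_left])
  simpa [AffineMap.lineMap_apply_module] using
    AffineMap.lineMap_mem c (mem_affineSpan ℝ h0) (mem_affineSpan ℝ hu)

theorem Bornology.IsBounded.intrinsicFrontier_nonempty {s : Set E} (hs : Bornology.IsBounded s)
    {x y : E} (hx : x ∈ s) (hy : y ∈ s) (hxy : x ≠ y) : (intrinsicFrontier ℝ s).Nonempty := by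
  obtain ⟨R, hR⟩ := hs.subset_closedBall x
  have hfar : AffineMap.lineMap x y ((|R| + 1) / dist x y) ∉ s := fun h => by
    have := hR h
    rw [mem_closedBall, dist_comm, dist_left_lineMap, Real.norm_of_nonneg (by positivity),
      div_mul_cancel₀ _ (dist_ne_zero.2 hxy)] at this
    linarith [le_abs_self R]
  obtain ⟨t, -, ht⟩ := exists_lineMap_mem_intrinsicFrontier hx
    (AffineMap.lineMap_mem _ (mem_affineSpan ℝ hx) (mem_affineSpan ℝ hy)) hfar
  exact ⟨_, ht⟩

theorem infDist_intrinsicFrontier_pos [FiniteDimensional ℝ E] {s : Set E}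
    (hs : Bornology.IsBounded s) {x y : E} (hx : x ∈ intrinsicInterior ℝ s) (hy : y ∈ s)
    (hxy : x ≠ y) : 0 < infDist x (intrinsicFrontier ℝ s) := by
  have hne := hs.intrinsicFrontier_nonempty (intrinsicInterior_subset hx) hy hxy
  refine ((isClosed_intrinsicFrontier (affineSpan ℝ s).closed_of_finiteDimensional)
    |>.notMem_iff_infDist_pos hne).1 ?_
  rw [← intrinsicClosure_sdiff_intrinsicInterior]
  exact fun h => h.2 hx

theorem zero_mem_intrinsicInterior_convexHull {ι : Type*} [Fintype ι] {v : ι → E} {w : ι → ℝ}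
    (hw : ∀ i, 0 < w i) (hw₁ : ∑ i, w i = 1) (hwv : ∑ i, w i • v i = 0) :
    (0 : E) ∈ intrinsicInterior ℝ (convexHull ℝ (range v)) := by
  set Φ := Fintype.linearCombination ℝ v
  -- As `∑ wᵢ vᵢ = 0`, `Φ c` is the convex combination with weights `w + c - (∑ c) w`.
  set W : Set (ι → ℝ) := ⋂ i, {c | 0 < w i + c i - (∑ j, c j) * w i}
  have hW : IsOpen W :=
    isOpen_iInter_of_finite fun i => isOpen_lt continuous_const (by fun_prop)
  have hWQ : ∀ c ∈ W, Φ c ∈ convexHull ℝ (range v) := by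
    intro c hc
    rw [mem_iInter] at hc
    have : Φ c = ∑ i, (w i + c i - (∑ j, c j) * w i) • v i := by
      simp [Φ, Fintype.linearCombination_apply, add_smul, sub_smul, Finset.sum_add_distrib,
        Finset.sum_sub_distrib, mul_smul, ← Finset.smul_sum, hwv]
    rw [this]
    exact (convex_convexHull ℝ _).sum_mem (fun i _ => (hc i).le)
      (by simp [Finset.sum_add_distrib, Finset.sum_sub_distrib, ← Finset.mul_sum, hw₁])
      fun i _ => subset_convexHull ℝ _ ⟨i, rfl⟩
  have hspan : ∀ a ∈ affineSpan ℝ (convexHull ℝ (range v)), a ∈ LinearMap.range Φ := by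
    intro a ha
    rw [affineSpan_convexHull] at ha
    simpa [Φ, Fintype.range_linearCombination] using affineSpan_subset_span ha
  let incl : affineSpan ℝ (convexHull ℝ (range v)) → LinearMap.range Φ :=
    fun a => ⟨a, hspan a a.2⟩
  have hO : IsOpen (incl ⁻¹' (Φ.rangeRestrict '' W)) :=
    (LinearMap.isOpenMap_of_finiteDimensional _ Φ.surjective_rangeRestrict W hW).preimage
      (continuous_subtype_val.subtype_mk _)
  have h0W : (0 : ι → ℝ) ∈ W := by simpa [W] using hw
  have h0Q : (0 : E) ∈ convexHull ℝ (range v) := by simpa using hWQ 0 h0W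
  refine mem_intrinsicInterior.2 ⟨⟨0, mem_affineSpan ℝ h0Q⟩,
    mem_interior.2 ⟨_, ?_, hO, ⟨0, h0W, ?_⟩⟩, rfl⟩
  · rintro a ⟨c, hc, hca⟩
    have : Φ c = a := congrArg Subtype.val hca
    simpa [← this] using hWQ c hc
  · exact Subtype.ext (by simp [incl])

end IntrinsicFrontier

theorem inf'_inner_le_of_mem_convexHull {F : Type*} [NormedAddCommGroup F]
    [InnerProductSpace ℝ F] {ι : Type*} [Fintype ι] [Nonempty ι] {v : ι → F} {q : F}
    (hq : q ∈ convexHull ℝ (range v)) (x : F) :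
    Finset.univ.inf' Finset.univ_nonempty (fun i => ⟪v i, x⟫) ≤ ⟪q, x⟫ := by
  obtain ⟨_, ⟨i, rfl⟩, hi⟩ := ((innerₛₗ ℝ).flip x).concaveOn convex_univ
    |>.exists_le_of_mem_convexHull (subset_univ _) hq
  exact (Finset.inf'_le _ (Finset.mem_univ i)).trans hi

theorem stmt5_general {n k : ℕ}
    (ps : Fin (k + 1) → Euc n) (lam : Fin (k + 1) → ℝ)
    (hlam : ∀ i, lam i ∈ Ioo (0:ℝ) 1) (hsum : (∑ i, lam i) = 1)
    (p : Euc n) (hp : p = ∑ i, lam i • ps i) (hne : ∃ i, ps i ≠ p)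
    (K : ℝ)
    (hK : K = infDist (0 : Euc n)
      (intrinsicFrontier ℝ (convexHull ℝ (Set.range fun i => p - ps i)))) :
    0 < K ∧ ∀ z ∈ convexHull ℝ (Set.range fun i => ps i - p), z ≠ 0 →
      ∀ x : Euc n,
        (Finset.univ.inf' Finset.univ_nonempty fun i => ⟪ps i - p, x⟫)
          ≤ -(K * |⟪(‖z‖⁻¹ : ℝ) • z, x⟫|) := by
  set Q := convexHull ℝ (range fun i => p - ps i)
  have hQ : IsCompact Q := (finite_range _).isCompact_convexHull ℝ
  have h0 : (0 : Euc n) ∈ intrinsicInterior ℝ Q :=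
    zero_mem_intrinsicInterior_convexHull (fun i => (hlam i).1) hsum <| by
      simp [smul_sub, Finset.sum_sub_distrib, ← Finset.sum_smul, hsum, ← hp]
  obtain ⟨i, hi⟩ := hne
  have hK₀ : 0 < K := hK ▸ infDist_intrinsicFrontier_pos hQ.isBounded h0
    (subset_convexHull ℝ _ ⟨i, rfl⟩) (by simpa [sub_eq_zero, eq_comm] using hi)
  refine ⟨hK₀, fun z hz hz0 x => ?_⟩
  have hQneg : convexHull ℝ (range fun i => ps i - p) = -Q := by
    rw [← convexHull_neg]
    congr 1
    ext
    simp [← neg_eq_iff_eq_neg]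
  rw [hQneg] at hz
  set ζ := (‖z‖⁻¹ : ℝ) • z
  have hmin : ∀ c : ℝ, |c| ≤ K →
      (Finset.univ.inf' Finset.univ_nonempty fun i => ⟪ps i - p, x⟫) ≤ c * ⟪ζ, x⟫ := by
    intro c hc
    have hcζ : -(c • ζ) = (c * ‖z‖⁻¹) • -z := by simp [ζ, mul_smul]
    have hmem : -(c • ζ) ∈ Q := hcζ ▸ smul_mem_of_norm_le_infDist_intrinsicFrontier
      hQ.isClosed (intrinsicInterior_subset h0) hz (by simpa [← hcζ, ← hK, norm_smul, ζ, hz0])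
    rw [← real_inner_smul_left]
    exact inf'_inner_le_of_mem_convexHull (hQneg ▸ Set.mem_neg.2 hmem) x
  rw [le_neg, ← abs_of_pos hK₀, ← abs_mul]
  exact abs_le.2 ⟨by linarith [hmin K (abs_of_pos hK₀).le],
    by linarith [hmin (-K) (by rw [abs_neg, abs_of_pos hK₀])]⟩

theorem stmt5 {n k : ℕ} (hk : 1 ≤ k)
    (ps : Fin (k + 1) → Euc n) (lam : Fin (k + 1) → ℝ)
    (hlam : ∀ i, lam i ∈ Ioo (0:ℝ) 1) (hsum : (∑ i, lam i) = 1)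
    (p : Euc n) (hp : p = ∑ i, lam i • ps i) (hne : ∃ i, ps i ≠ p)
    (K : ℝ)
    (hK : K = infDist (0 : Euc n)
      (intrinsicFrontier ℝ (convexHull ℝ (Set.range fun i => p - ps i)))) :
    0 < K ∧ ∀ z ∈ convexHull ℝ (Set.range fun i => ps i - p), z ≠ 0 →
      ∀ x : Euc n,
        (Finset.univ.inf' Finset.univ_nonempty fun i => ⟪ps i - p, x⟫)
          ≤ -(K * |⟪(‖z‖⁻¹ : ℝ) • z, x⟫|) :=
  stmt5_general ps lam hlam hsum p hp hne K hK
end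
end

section
/- Let Ω ⊆ ℝⁿ be a nonempty open set and let u be a continuous function on Ω which is a viscosity supersolution of −Δ∞u = 1 in Ω and satisfies u ≥ 0 in Ω. Then u(x) > 0 for every x ∈ Ω. -/
open Set Metric Filter MeasureTheory
open scoped RealInnerProductSpace Topology NNReal

noncomputable section

theorem stmt8 {n : ℕ} (Ω : Set (Euc n)) (hne : Ω.Nonempty) (hopen : IsOpen Ω)
    (u : Euc n → ℝ) (hsup : IsViscSupersol Ω (fun _ _ => 1) u)
    (hnonneg : ∀ x ∈ Ω, 0 ≤ u x) :
    ∀ x ∈ Ω, 0 < u x := by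
  intro x hx
  rcases lt_or_eq_of_le (hnonneg x hx) with h | h
  · exact h
  · exfalso
    have hmin : IsLocalMinOn (fun y => u y - (fun _ : Euc n => (0:ℝ)) y) Ω x := by
      apply Filter.eventually_of_mem (self_mem_nhdsWithin)
      intro y hy
      simp only [sub_zero, ← h]
      exact hnonneg y hy
    have := hsup.2 x hx (fun _ => 0) contDiff_const hmin
    have hlap : infLap (fun _ : Euc n => (0:ℝ)) x = 0 := by
      simp [infLap, gradient_const]
    rw [hlap] at this
    simp at this
    linarith
end
end

section
/- Let v : ℝⁿ → ℝ be Lipschitz continuous with Lipschitz constant L, and suppose v is a viscosity subsolution of −Δ∞v = 1 on an open set U ⊆ ℝⁿ. For ε > 0, define the sup-convolution v^ε(x) := sup_{y ∈ ℝⁿ} ( v(y) − |x−y|²/(2ε) ). Then v^ε is a viscosity subsolution of −Δ∞w = 1 on the open set A := {x ∈ U : dist(x, ℝⁿ∖U) > 2εL}. -/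
open Set Metric Filter MeasureTheory
open scoped RealInnerProductSpace Topology NNReal

noncomputable section

/-!
Let `y₀` attain the supremum defining `vε x₀`. Since `vε (y + (x₀ - y₀)) ≥ v y - ‖x₀ - y₀‖² / (2ε)`
with equality at `y = y₀`, a test function `φ` touching `vε` from above at `x₀` yields the test
function `φ (· + (x₀ - y₀))` touching `v` from above at `y₀`. The infinity Laplacian commutes with
translations, so the subsolution inequality for `v` at `y₀` is the one for `vε` at `x₀`. For
`L`-Lipschitz `v` the maximiser exists and satisfies `‖x₀ - y₀‖ ≤ 2εL`, hence lies in `U`.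
-/

section Translation

variable {F : Type*} [NormedAddCommGroup F] [InnerProductSpace ℝ F] [CompleteSpace F]

theorem gradient_comp_add_right (f : F → ℝ) (c x : F) :
    gradient (fun y => f (y + c)) x = gradient f (x + c) := by
  simp only [gradient, fderiv_comp_add_right]

theorem infLap_comp_add_right {n : ℕ} (φ : Euc n → ℝ) (c x : Euc n) :
    infLap (fun y => φ (y + c)) x = infLap φ (x + c) := by
  have hgrad : gradient (fun y => φ (y + c)) = fun y => gradient φ (y + c) :=
    funext fun y => gradient_comp_add_right φ c y
  simp only [infLap, hgrad, fderiv_comp_add_right]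

end Translation

theorem isOpen_sep_lt_infDist_compl {X : Type*} [PseudoMetricSpace X] {U : Set X} {r : ℝ}
    (hr : 0 ≤ r) : IsOpen {x ∈ U | r < infDist x Uᶜ} := by
  convert isOpen_lt continuous_const (continuous_infDist_pt Uᶜ) using 1
  ext x
  refine ⟨And.right, fun hx => ⟨?_, hx⟩⟩
  by_contra hxU
  have hx' : r < infDist x Uᶜ := hx
  linarith [infDist_zero_of_mem (mem_compl hxU)]

section SupConvolution

variable {E : Type*} [NormedAddCommGroup E]

def supConv (v : E → ℝ) (ε : ℝ) (x : E) : ℝ :=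
  ⨆ y, v y - ‖x - y‖ ^ 2 / (2 * ε)

theorem le_supConv {v : E → ℝ} {ε : ℝ} {x : E}
    (hb : BddAbove (range fun y => v y - ‖x - y‖ ^ 2 / (2 * ε))) (y : E) :
    v y - ‖x - y‖ ^ 2 / (2 * ε) ≤ supConv v ε x :=
  le_ciSup hb y

theorem isLocalMax_sub_comp_add_of_supConv_eq {v φ : E → ℝ} {ε : ℝ} {x₀ y₀ : E}
    (hb : ∀ x, BddAbove (range fun y => v y - ‖x - y‖ ^ 2 / (2 * ε)))
    (hmax : IsLocalMax (fun x => supConv v ε x - φ x) x₀)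
    (hy₀ : supConv v ε x₀ = v y₀ - ‖x₀ - y₀‖ ^ 2 / (2 * ε)) :
    IsLocalMax (fun y => v y - φ (y + (x₀ - y₀))) y₀ := by
  have hshift : IsLocalMax (fun y => supConv v ε (y + (x₀ - y₀)) - φ (y + (x₀ - y₀))) y₀ := by
    have hmax' : IsLocalMax (fun x => supConv v ε x - φ x) (y₀ + (x₀ - y₀)) := by
      rwa [add_sub_cancel]
    exact hmax'.comp_continuous (g := (· + (x₀ - y₀))) (continuous_add_const _).continuousAt
  filter_upwards [hshift] with y hy
  have hle := le_supConv (hb (y + (x₀ - y₀))) y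
  simp only [add_sub_cancel_left, add_sub_cancel] at hle hy ⊢
  linarith

namespace LipschitzWith

variable {v : E → ℝ} {L : ℝ≥0} {ε : ℝ}

theorem sub_sq_div_le (hv : LipschitzWith L v) (hε : 0 < ε) (x y : E) :
    v y - ‖x - y‖ ^ 2 / (2 * ε) ≤ v x + ε * L ^ 2 / 2 := by
  have hlip : v y ≤ v x + L * ‖x - y‖ := by simpa [dist_eq_norm'] using hv.le_add_mul y x
  -- `L t - t² / (2ε) ≤ ε L² / 2` is AM-GM
  have hamgm : (L : ℝ) * ‖x - y‖ ≤ ‖x - y‖ ^ 2 / (2 * ε) + ε * L ^ 2 / 2 := by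
    rw [div_add' _ _ _ (by positivity), le_div_iff₀ (by positivity)]
    nlinarith [sq_nonneg (‖x - y‖ - ε * L)]
  linarith

theorem sub_sq_div_le_of_le_norm (hv : LipschitzWith L v) (hε : 0 < ε) {x y : E}
    (h : 2 * ε * L ≤ ‖x - y‖) : v y - ‖x - y‖ ^ 2 / (2 * ε) ≤ v x := by
  have hlip : v y ≤ v x + L * ‖x - y‖ := by simpa [dist_eq_norm'] using hv.le_add_mul y x
  have hquad : (L : ℝ) * ‖x - y‖ ≤ ‖x - y‖ ^ 2 / (2 * ε) := by
    rw [le_div_iff₀ (by positivity)]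
    nlinarith [norm_nonneg (x - y)]
  linarith

theorem bddAbove_range_sub_sq_div (hv : LipschitzWith L v) (hε : 0 < ε) (x : E) :
    BddAbove (range fun y => v y - ‖x - y‖ ^ 2 / (2 * ε)) :=
  ⟨v x + ε * L ^ 2 / 2, forall_mem_range.2 (hv.sub_sq_div_le hε x)⟩

theorem exists_supConv_eq [ProperSpace E] (hv : LipschitzWith L v) (hε : 0 < ε) (x : E) :
    ∃ y, ‖x - y‖ ≤ 2 * ε * L ∧ supConv v ε x = v y - ‖x - y‖ ^ 2 / (2 * ε) := by
  have hcont : Continuous fun y => v y - ‖x - y‖ ^ 2 / (2 * ε) :=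
    hv.continuous.sub (by fun_prop)
  have hx : x ∈ closedBall x (2 * ε * L) := mem_closedBall_self (by positivity)
  obtain ⟨y₀, hy₀, hmax⟩ :=
    (isCompact_closedBall x (2 * ε * L)).exists_isMaxOn ⟨x, hx⟩ hcont.continuousOn
  have hglobal : ∀ y, v y - ‖x - y‖ ^ 2 / (2 * ε) ≤ v y₀ - ‖x - y₀‖ ^ 2 / (2 * ε) := by
    intro y
    by_cases hy : y ∈ closedBall x (2 * ε * L)
    · exact hmax hy
    · rw [mem_closedBall, dist_eq_norm', not_le] at hy
      calc v y - ‖x - y‖ ^ 2 / (2 * ε) ≤ v x := hv.sub_sq_div_le_of_le_norm hε hy.le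
        _ = v x - ‖x - x‖ ^ 2 / (2 * ε) := by simp
        _ ≤ _ := hmax hx
  refine ⟨y₀, by simpa [dist_eq_norm'] using hy₀, ?_⟩
  exact le_antisymm (ciSup_le hglobal) (le_supConv (hv.bddAbove_range_sub_sq_div hε x) y₀)

protected theorem supConv (hv : LipschitzWith L v) (hε : 0 < ε) :
    LipschitzWith L (supConv v ε) := by
  refine LipschitzWith.of_le_add_mul L fun a b => ciSup_le fun y => ?_
  -- translate the competitor `y` for `a` into the competitor `y - a + b` for `b`
  have hle := le_supConv (hv.bddAbove_range_sub_sq_div hε b) (y - a + b)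
  have hlip : v y ≤ v (y - a + b) + L * dist a b := by
    simpa [dist_eq_norm, show y - (y - a + b) = a - b by abel] using hv.le_add_mul y (y - a + b)
  rw [show b - (y - a + b) = a - y by abel] at hle
  linarith

end LipschitzWith

end SupConvolution

theorem stmt13_general {n : ℕ} (U : Set (Euc n))
    (L : ℝ≥0) (v : Euc n → ℝ) (hLip : LipschitzWith L v)
    (hsub : IsViscSubsol U (fun _ _ => 1) v)
    (ε : ℝ) (hε : 0 < ε)
    (vε : Euc n → ℝ)
    (hvε : ∀ x, vε x = ⨆ y : Euc n, (v y - ‖x - y‖ ^ 2 / (2 * ε))) :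
    IsViscSubsol {x ∈ U | 2 * ε * (L : ℝ) < infDist x Uᶜ} (fun _ _ => 1) vε := by
  obtain rfl : vε = supConv v ε := funext hvε
  refine ⟨(hLip.supConv hε).continuous.continuousOn, ?_⟩
  rintro x₀ hx₀ φ hφ hmax
  have hA := isOpen_sep_lt_infDist_compl (U := U) (by positivity : 0 ≤ 2 * ε * (L : ℝ))
  obtain ⟨y₀, hdist, hy₀⟩ := hLip.exists_supConv_eq hε x₀
  have hy₀U : y₀ ∈ U :=
    notMem_compl_iff.1 <| notMem_of_dist_lt_infDist ((dist_eq_norm x₀ y₀ ▸ hdist).trans_lt hx₀.2)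
  have hloc := isLocalMax_sub_comp_add_of_supConv_eq (hLip.bddAbove_range_sub_sq_div hε)
    (hmax.isLocalMax (hA.mem_nhds hx₀)) hy₀
  have hφ' : ContDiff ℝ 2 fun y => φ (y + (x₀ - y₀)) := hφ.comp (contDiff_id.add contDiff_const)
  simpa [infLap_comp_add_right] using hsub.2 y₀ hy₀U _ hφ' (hloc.on U)

theorem stmt13 {n : ℕ} (U : Set (Euc n)) (hU : IsOpen U)
    (L : ℝ≥0) (v : Euc n → ℝ) (hLip : LipschitzWith L v)
    (hsub : IsViscSubsol U (fun _ _ => 1) v)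
    (ε : ℝ) (hε : 0 < ε)
    (vε : Euc n → ℝ)
    (hvε : ∀ x, vε x = ⨆ y : Euc n, (v y - ‖x - y‖ ^ 2 / (2 * ε))) :
    IsViscSubsol {x ∈ U | 2 * ε * (L : ℝ) < infDist x Uᶜ} (fun _ _ => 1) vε :=
  stmt13_general U L v hLip hsub ε hε vε hvε
end
end
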